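/- arXiv:2409.06054 — 7 statements merged into one kernel-verified Lean document; each statement's English description precedes it below -/
import Mathlib

section
/- If A has relative complements (for all a, a' there exists c with a ∨ c = a ∨ a' and a ∧ c = ⊥) and a complete transitive relation ≽ on A satisfies (i) a ≤ b implies a ≽ b, and (ii) a ≻ b and a' ≻ b imply (a ∨ a') ≻ b, then ≽ satisfies: whenever for all b, (a ∧ b ∼ ⊥ ↔ a' ∧ b ∼ ⊥), we have a ∼ a'. -/
theorem stmt_0 {A : Type*} [DistribLattice A] [BoundedOrder A]
    (S : A → A → Prop)
    (hrelcompl : ∀ a a' : A, ∃ c : A, a ⊔ c = a ⊔ a' ∧ a ⊓ c = ⊥)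
    (htotal : ∀ a b : A, S a b ∨ S b a)
    (htrans : ∀ a b c : A, S a b → S b c → S a c)
    (hax1 : ∀ a b : A, a ≤ b → S a b)
    (hax2 : ∀ a a' b : A, (S a b ∧ ¬ S b a) → (S a' b ∧ ¬ S b a') →
      (S (a ⊔ a') b ∧ ¬ S b (a ⊔ a')))
    (a a' : A)
    (hcong : ∀ b : A, (S (a ⊓ b) ⊥ ∧ S ⊥ (a ⊓ b)) ↔ (S (a' ⊓ b) ⊥ ∧ S ⊥ (a' ⊓ b))) :
    S a a' ∧ S a' a := by
  have key : ∀ x c : A, S c ⊥ → S (x ⊔ c) x := by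
    intro x c hc
    by_contra h
    have h1 : S x (x ⊔ c) := hax1 _ _ le_sup_left
    have h2 : S c (x ⊔ c) := hax1 _ _ le_sup_right
    have h3 : ¬ S (x ⊔ c) c := fun hcc =>
      h (htrans _ _ _ (htrans _ _ _ hcc hc) (hax1 _ _ bot_le))
    have h4 := hax2 x c (x ⊔ c) ⟨h1, h⟩ ⟨h2, h3⟩
    exact h4.2 h4.1
  have step : ∀ x y : A,
      (∀ b, (S (x ⊓ b) ⊥ ∧ S ⊥ (x ⊓ b)) → (S (y ⊓ b) ⊥ ∧ S ⊥ (y ⊓ b))) → S y x := by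
    intro x y hc
    obtain ⟨c, hsup, hinf⟩ := hrelcompl x y
    have hcle : c ≤ y := by
      have h1 : c ≤ x ⊔ y := hsup ▸ le_sup_right
      have h2 : c = (c ⊓ x) ⊔ (c ⊓ y) := by
        rw [← inf_sup_left, inf_eq_left.mpr h1]
      rw [h2, inf_comm c x, hinf, bot_sup_eq]
      exact inf_le_right
    have hc1 : S (y ⊓ c) ⊥ ∧ S ⊥ (y ⊓ c) := by
      apply hc c
      rw [hinf]
      exact ⟨hax1 _ _ le_rfl, hax1 _ _ le_rfl⟩
    have hcbot : S c ⊥ := by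
      have h := hc1.1
      rwa [inf_eq_right.mpr hcle] at h
    have := key x c hcbot
    rw [hsup] at this
    exact htrans _ _ _ (hax1 _ _ le_sup_right) this
  constructor
  · exact step a' a fun b h => (hcong b).mpr h
  · exact step a a' fun b h => (hcong b).mp h
end

section
/- Let A be a bounded distributive lattice and ≽ a complete transitive relation on A \ {⊥} satisfying Axiom 1 (a ≤ b → a ≽ b) and Axiom 2 (a ≻ b ∧ a' ≻ b → a ∨ a' ≻ b). Then for each a ≠ ⊥, the set S(a) = {c : c ≻ a} ∪ {⊥} is a proper ideal of A containing ⊥ and not containing ⊤. -/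
/-- An ideal of a bounded lattice: nonempty, downward closed, closed under joins. -/
def IsLatticeIdeal {A : Type*} [DistribLattice A] [BoundedOrder A] (I : Set A) : Prop :=
  I.Nonempty ∧ (∀ a b : A, b ∈ I → a ≤ b → a ∈ I) ∧ (∀ a b : A, a ∈ I → b ∈ I → a ⊔ b ∈ I)

theorem stmt_3 {A : Type*} [DistribLattice A] [BoundedOrder A]
    (S : A → A → Prop)
    (htotal : ∀ a b : A, a ≠ ⊥ → b ≠ ⊥ → S a b ∨ S b a)
    (htrans : ∀ a b c : A, a ≠ ⊥ → b ≠ ⊥ → c ≠ ⊥ → S a b → S b c → S a c)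
    (hax1 : ∀ a b : A, a ≠ ⊥ → b ≠ ⊥ → a ≤ b → S a b)
    (hax2 : ∀ a a' b : A, a ≠ ⊥ → a' ≠ ⊥ → b ≠ ⊥ →
      (S a b ∧ ¬ S b a) → (S a' b ∧ ¬ S b a') → (S (a ⊔ a') b ∧ ¬ S b (a ⊔ a')))
    (a : A) (ha : a ≠ ⊥) :
    IsLatticeIdeal ({c : A | S c a ∧ ¬ S a c} ∪ {⊥}) ∧
    (⊥ : A) ∈ ({c : A | S c a ∧ ¬ S a c} ∪ {⊥}) ∧
    (⊤ : A) ∉ ({c : A | S c a ∧ ¬ S a c} ∪ {⊥}) := by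
  have hbot : (⊥:A) ∈ ({c : A | S c a ∧ ¬ S a c} ∪ {⊥}) := Or.inr rfl
  refine ⟨⟨⟨⊥, hbot⟩, ?_, ?_⟩, hbot, ?_⟩
  · rintro x y (⟨hy1, hy2⟩ | hy) hxy
    · by_cases hx : x = ⊥
      · exact Or.inr hx
      · have hyb : y ≠ ⊥ := fun h => hx (le_bot_iff.mp (h ▸ hxy))
        have hxy' : S x y := hax1 x y hx hyb hxy
        refine Or.inl ⟨htrans x y a hx hyb ha hxy' hy1, fun hax => ?_⟩
        exact hy2 (htrans a x y ha hx hyb hax hxy')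
    · simp only [Set.mem_singleton_iff] at hy
      subst hy
      exact Or.inr (le_bot_iff.mp hxy)
  · rintro x y (hx | hx) (hy | hy)
    · by_cases hxb : x = ⊥
      · subst hxb; rw [bot_sup_eq]; exact Or.inl hy
      · by_cases hyb : y = ⊥
        · subst hyb; rw [sup_bot_eq]; exact Or.inl hx
        · exact Or.inl (hax2 x y a hxb hyb ha hx hy)
    · simp only [Set.mem_singleton_iff] at hy; subst hy; rw [sup_bot_eq]; exact Or.inl hx
    · simp only [Set.mem_singleton_iff] at hx; subst hx; rw [bot_sup_eq]; exact Or.inl hy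
    · simp only [Set.mem_singleton_iff] at hx hy; subst hx; subst hy
      rw [sup_bot_eq]; exact hbot
  · rintro (⟨h1, h2⟩ | h)
    · exact h2 (hax1 a ⊤ ha (fun ht => ha (le_bot_iff.mp (ht ▸ le_top))) le_top)
    · simp only [Set.mem_singleton_iff] at h
      exact ha (le_bot_iff.mp (h ▸ le_top))
end

section
/- Let A be a bounded distributive lattice and ≽ a complete transitive relation on A \ {⊥} satisfying Axioms 1 and 2. Then for all a, b ≠ ⊥: a ≽ b if and only if there exists a prime filter G of A with b ∈ G such that a ≽ b' for all b' ∈ G. -/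
/-- A prime filter: nonempty, upward closed, meet-closed, proper, and
`a ⊔ b ∈ F` implies `a ∈ F` or `b ∈ F`. -/
def IsPrimeLatticeFilter {A : Type*} [DistribLattice A] [BoundedOrder A] (F : Set A) : Prop :=
  F.Nonempty ∧ (∀ a b : A, a ∈ F → a ≤ b → b ∈ F) ∧ (∀ a b : A, a ∈ F → b ∈ F → a ⊓ b ∈ F) ∧
  F ≠ Set.univ ∧ (∀ a b : A, a ⊔ b ∈ F → a ∈ F ∨ b ∈ F)

theorem stmt_5 {A : Type*} [DistribLattice A] [BoundedOrder A]
    (S : A → A → Prop)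
    (htotal : ∀ a b : A, a ≠ ⊥ → b ≠ ⊥ → S a b ∨ S b a)
    (htrans : ∀ a b c : A, a ≠ ⊥ → b ≠ ⊥ → c ≠ ⊥ → S a b → S b c → S a c)
    (hax1 : ∀ a b : A, a ≠ ⊥ → b ≠ ⊥ → a ≤ b → S a b)
    (hax2 : ∀ a a' b : A, a ≠ ⊥ → a' ≠ ⊥ → b ≠ ⊥ →
      (S a b ∧ ¬ S b a) → (S a' b ∧ ¬ S b a') → (S (a ⊔ a') b ∧ ¬ S b (a ⊔ a')))
    (a b : A) (ha : a ≠ ⊥) (hb : b ≠ ⊥) :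
    S a b ↔ ∃ G : Set A, IsPrimeLatticeFilter G ∧ b ∈ G ∧ ∀ b' ∈ G, S a b' := by
  constructor
  · intro hab
    -- the ideal of "strictly worse than a" elements together with ⊥
    set Iset : Set A := {c | c = ⊥ ∨ ¬ S a c} with hIset
    have hIlower : IsLowerSet Iset := by
      intro c d hdc hc
      rcases eq_or_ne d ⊥ with hd | hd
      · exact Or.inl hd
      rcases hc with hcbot | hcS
      · exact absurd (le_bot_iff.mp (hcbot ▸ hdc)) hd
      · refine Or.inr fun had => hcS ?_
        have hc : c ≠ ⊥ := fun h => hd (le_bot_iff.mp (h ▸ hdc))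
        exact htrans a d c ha hd hc had (hax1 d c hd hc hdc)
    have hIjoin : ∀ c ∈ Iset, ∀ c' ∈ Iset, c ⊔ c' ∈ Iset := by
      intro c hc c' hc'
      rcases eq_or_ne c ⊥ with rfl | hcb
      · simpa using hc'
      rcases eq_or_ne c' ⊥ with rfl | hcb'
      · simpa using hc
      have hcS : ¬ S a c := hc.resolve_left hcb
      have hcS' : ¬ S a c' := hc'.resolve_left hcb'
      have h1 : S c a := (htotal a c ha hcb).resolve_left hcS
      have h2 : S c' a := (htotal a c' ha hcb').resolve_left hcS'
      exact Or.inr (hax2 c c' a hcb hcb' ha ⟨h1, hcS⟩ ⟨h2, hcS'⟩).2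
    have hIideal : Order.IsIdeal Iset := by
      refine ⟨hIlower, ⟨⊥, Or.inl rfl⟩, ?_⟩
      intro c hc c' hc'
      exact ⟨c ⊔ c', hIjoin c hc c' hc', le_sup_left, le_sup_right⟩
    have hdisj : Disjoint ((Order.PFilter.principal b : Order.PFilter A) : Set A) Iset := by
      rw [Set.disjoint_left]
      intro x hx hxI
      have hbx : b ≤ x := hx
      have hx0 : x ≠ ⊥ := fun h => hb (le_bot_iff.mp (h ▸ hbx))
      have : ¬ S a x := hxI.resolve_left hx0
      exact this (htrans a b x ha hb hx0 hab (hax1 b x hb hx0 hbx))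
    obtain ⟨J, hJprime, hIJ, hJdisj⟩ :=
      DistribLattice.prime_ideal_of_disjoint_filter_ideal (I := hIideal.toIdeal) hdisj
    refine ⟨(↑J : Set A)ᶜ, ⟨?_, ?_, ?_, ?_, ?_⟩, ?_, ?_⟩
    · exact ⟨b, Set.disjoint_left.mp hJdisj (le_refl b)⟩
    · intro x y hx hxy hy
      exact hx (J.lower hxy hy)
    · intro x y hx hy hxy
      exact (hJprime.mem_or_mem hxy).elim hx hy
    · intro h
      have : ⊥ ∈ (↑J : Set A)ᶜ := h ▸ Set.mem_univ ⊥
      exact this (hIJ (Or.inl rfl))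
    · intro x y hxy
      by_contra h
      push_neg at h
      exact hxy (J.sup_mem (not_not.mp h.1) (not_not.mp h.2))
    · exact Set.disjoint_left.mp hJdisj (le_refl b)
    · intro b' hb'
      have : b' ∉ Iset := fun h => hb' (hIJ h)
      rcases eq_or_ne b' ⊥ with rfl | hb'0
      · exact absurd (Or.inl rfl) this
      · exact not_not.mp fun h => this (Or.inr h)
  · rintro ⟨G, hG, hbG, hSG⟩
    exact hSG b hbG
end

section
/- Let A be a bounded distributive lattice and ≽ a complete transitive relation on A \ {⊥}. Suppose for all a, b ≠ ⊥: a ≽ b iff there exists a prime filter G containing b with a ≽ b' for all b' ∈ G. Define F ≽→ G on prime filters by: ∀ b ∈ G, ∃ a ∈ F with a ≽ b; and define a ≽↔ b by: ∀ prime filter F containing a, ∃ prime filter G containing b with F ≽→ G. Then a ≽ b iff a ≽↔ b. -/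
lemma bot_notMem_primeFilter {A : Type*} [DistribLattice A] [BoundedOrder A] {F : Set A}
    (hF : IsPrimeLatticeFilter F) : ⊥ ∉ F := by
  intro hbot
  exact hF.2.2.2.1 (Set.eq_univ_of_forall fun x => hF.2.1 ⊥ x hbot bot_le)

theorem stmt_6 {A : Type*} [DistribLattice A] [BoundedOrder A]
    (S : A → A → Prop)
    (htotal : ∀ a b : A, a ≠ ⊥ → b ≠ ⊥ → S a b ∨ S b a)
    (htrans : ∀ a b c : A, a ≠ ⊥ → b ≠ ⊥ → c ≠ ⊥ → S a b → S b c → S a c)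
    (hii : ∀ a b : A, a ≠ ⊥ → b ≠ ⊥ →
      (S a b ↔ ∃ G : Set A, IsPrimeLatticeFilter G ∧ b ∈ G ∧ ∀ b' ∈ G, S a b'))
    -- the order `≽→` on prime filters
    (Rto : Set A → Set A → Prop)
    (hRto : ∀ F G : Set A, Rto F G ↔ ∀ b ∈ G, ∃ a ∈ F, S a b)
    -- the dual order `≽↔` on the lattice
    (Dd : A → A → Prop)
    (hDd : ∀ a b : A, Dd a b ↔ ∀ F : Set A, IsPrimeLatticeFilter F → a ∈ F →
      ∃ G : Set A, IsPrimeLatticeFilter G ∧ b ∈ G ∧ Rto F G)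
    (a b : A) (ha : a ≠ ⊥) (hb : b ≠ ⊥) :
    S a b ↔ Dd a b := by
  constructor
  · intro hSab
    rw [hDd]
    intro F hF haF
    obtain ⟨G, hG, hbG, hall⟩ := (hii a b ha hb).mp hSab
    exact ⟨G, hG, hbG, (hRto F G).mpr fun b' hb' => ⟨a, haF, hall b' hb'⟩⟩
  · intro hDab
    have hSaa : S a a := (htotal a a ha ha).elim id id
    obtain ⟨F, hF, haF, hFall⟩ := (hii a a ha ha).mp hSaa
    obtain ⟨G, hG, hbG, hRtoFG⟩ := (hDd a b).mp hDab F hF haF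
    refine (hii a b ha hb).mpr ⟨G, hG, hbG, fun b' hb'G => ?_⟩
    obtain ⟨a', ha'F, hSa'b'⟩ := (hRto F G).mp hRtoFG b' hb'G
    have ha' : a' ≠ ⊥ := fun h => bot_notMem_primeFilter hF (h ▸ ha'F)
    have hb' : b' ≠ ⊥ := fun h => bot_notMem_primeFilter hG (h ▸ hb'G)
    exact htrans a a' b' ha ha' hb' (hFall a' ha'F) hSa'b'
end

section
/- Let A be a bounded distributive lattice, ≽ a complete transitive relation on A \ {⊥} satisfying Axioms 1 and 2. Then a ≽ b if and only if for every prime filter F containing a there exists a prime filter G containing b such that for every b' ∈ G there exists a' ∈ F with a' ≽ b'. -/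
/-- From an order ideal `D` disjoint from the principal filter at `c`, we get a prime
lattice filter containing `c` and disjoint from `D`. -/
lemma exists_primeFilter_of_isIdeal {A : Type*} [DistribLattice A] [BoundedOrder A]
    (D : Set A) (hI : Order.IsIdeal D) (c : A) (hdisj : ∀ x ∈ D, ¬ c ≤ x) :
    ∃ G : Set A, IsPrimeLatticeFilter G ∧ c ∈ G ∧ ∀ x ∈ G, x ∉ D := by
  obtain ⟨J, hJprime, hDJ, hJdisj⟩ :=
    DistribLattice.prime_ideal_of_disjoint_filter_ideal (F := Order.PFilter.principal c)
      (I := hI.toIdeal)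
      (by
        rw [Set.disjoint_left]
        intro x hx hxD
        exact hdisj x hxD (Order.PFilter.mem_principal.mp hx))
  refine ⟨(↑J : Set A)ᶜ, ?_, ?_, ?_⟩
  · refine ⟨⟨c, ?_⟩, ?_, ?_, ?_, ?_⟩
    · exact Set.disjoint_left.mp hJdisj (Order.PFilter.mem_principal.mpr le_rfl)
    · intro x y hx hxy hy
      exact hx (J.lower hxy hy)
    · intro x y hx hy hxy
      rcases hJprime.mem_or_mem hxy with h | h
      · exact hx h
      · exact hy h
    · intro h
      have hbot : (⊥ : A) ∈ J := J.bot_mem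
      have : (⊥ : A) ∈ (↑J : Set A)ᶜ := h ▸ Set.mem_univ _
      exact this hbot
    · intro x y hxy
      by_contra h
      push_neg at h
      simp only [Set.mem_compl_iff, not_not] at h
      exact hxy (Order.Ideal.sup_mem h.1 h.2)
  · exact Set.disjoint_left.mp hJdisj (Order.PFilter.mem_principal.mpr le_rfl)
  · intro x hx hxD
    exact hx (hDJ hxD)

theorem stmt_7 {A : Type*} [DistribLattice A] [BoundedOrder A]
    (S : A → A → Prop)
    (htotal : ∀ a b : A, a ≠ ⊥ → b ≠ ⊥ → S a b ∨ S b a)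
    (htrans : ∀ a b c : A, a ≠ ⊥ → b ≠ ⊥ → c ≠ ⊥ → S a b → S b c → S a c)
    (hax1 : ∀ a b : A, a ≠ ⊥ → b ≠ ⊥ → a ≤ b → S a b)
    (hax2 : ∀ a a' b : A, a ≠ ⊥ → a' ≠ ⊥ → b ≠ ⊥ →
      (S a b ∧ ¬ S b a) → (S a' b ∧ ¬ S b a') → (S (a ⊔ a') b ∧ ¬ S b (a ⊔ a')))
    (a b : A) (ha : a ≠ ⊥) (hb : b ≠ ⊥) :
    S a b ↔ ∀ F : Set A, IsPrimeLatticeFilter F → a ∈ F →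
      ∃ G : Set A, IsPrimeLatticeFilter G ∧ b ∈ G ∧ ∀ b' ∈ G, ∃ a' ∈ F, S a' b' := by
  -- The join of two nonbot elements is equivalent to one of them.
  have hjoin : ∀ x y : A, x ≠ ⊥ → y ≠ ⊥ → S (x ⊔ y) x ∨ S (x ⊔ y) y := by
    intro x y hx hy
    have hj : x ⊔ y ≠ ⊥ := by
      intro h
      exact hx (le_bot_iff.mp (h ▸ (le_sup_left : x ≤ x ⊔ y)))
    by_contra h
    push_neg at h
    have h1 : S x (x ⊔ y) := hax1 _ _ hx hj le_sup_left
    have h2 : S y (x ⊔ y) := hax1 _ _ hy hj le_sup_right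
    have := hax2 x y (x ⊔ y) hx hy hj ⟨h1, h.1⟩ ⟨h2, h.2⟩
    exact this.2 (hax1 _ _ hj hj le_rfl)
  constructor
  · intro hSab F hF haF
    have hFne : ∀ x ∈ F, x ≠ ⊥ := by
      intro x hx hxb
      apply hF.2.2.2.1
      apply Set.eq_univ_of_forall
      intro y
      exact hF.2.1 x y hx (hxb ▸ bot_le)
    -- the "bad" set: bottom together with elements not dominated by anything in F
    set D : Set A := {x : A | x = ⊥ ∨ ∀ a' ∈ F, ¬ S a' x} with hD
    have hDideal : Order.IsIdeal D := by
      constructor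
      · intro y x hxy hyD
        rcases hyD with hy | hy
        · exact Or.inl (le_bot_iff.mp (hy ▸ hxy))
        · by_cases hx : x = ⊥
          · exact Or.inl hx
          · refine Or.inr fun a' ha' hS => ?_
            have hyne : y ≠ ⊥ := by
              intro h'
              exact hx (le_bot_iff.mp (h' ▸ hxy))
            have ha'ne : a' ≠ ⊥ := hFne a' ha'
            exact hy a' ha' (htrans a' x y ha'ne hx hyne hS (hax1 _ _ hx hyne hxy))
      · exact ⟨⊥, Or.inl rfl⟩
      · intro x hx y hy
        refine ⟨x ⊔ y, ?_, le_sup_left, le_sup_right⟩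
        by_cases hxb : x = ⊥
        · subst hxb; simpa using hy
        by_cases hyb : y = ⊥
        · subst hyb; simpa using hx
        rcases hx with hx | hx
        · exact absurd hx hxb
        rcases hy with hy | hy
        · exact absurd hy hyb
        refine Or.inr fun a' ha' hS => ?_
        have hj : x ⊔ y ≠ ⊥ := by
          intro h
          exact hxb (le_bot_iff.mp (h ▸ (le_sup_left : x ≤ x ⊔ y)))
        have ha'ne : a' ≠ ⊥ := hFne a' ha'
        rcases hjoin x y hxb hyb with h' | h'
        · exact hx a' ha' (htrans a' (x ⊔ y) x ha'ne hj hxb hS h')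
        · exact hy a' ha' (htrans a' (x ⊔ y) y ha'ne hj hyb hS h')
    have hdisj : ∀ x ∈ D, ¬ b ≤ x := by
      rintro x (hx | hx) hbx
      · exact hb (le_bot_iff.mp (hx ▸ hbx))
      · have hxne : x ≠ ⊥ := fun h => hb (le_bot_iff.mp (h ▸ hbx))
        exact hx a haF (htrans a b x ha hb hxne hSab (hax1 _ _ hb hxne hbx))
    obtain ⟨G, hG, hbG, hGD⟩ := exists_primeFilter_of_isIdeal D hDideal b hdisj
    refine ⟨G, hG, hbG, fun b' hb' => ?_⟩
    have := hGD b' hb'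
    rw [hD, Set.mem_setOf_eq] at this
    push_neg at this
    obtain ⟨-, a', ha', hS⟩ := this
    exact ⟨a', ha', hS⟩
  · intro h
    by_contra hSab
    have hSba : S b a := (htotal a b ha hb).resolve_left hSab
    -- the set of elements at least as good as b, plus bottom
    set E : Set A := {x : A | x = ⊥ ∨ S x b} with hE
    have hEideal : Order.IsIdeal E := by
      constructor
      · intro y x hxy hyE
        by_cases hx : x = ⊥
        · exact Or.inl hx
        rcases hyE with hy | hy
        · exact Or.inl (le_bot_iff.mp (hy ▸ hxy))
        have hyne : y ≠ ⊥ := fun h' => hx (le_bot_iff.mp (h' ▸ hxy))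
        exact Or.inr (htrans x y b hx hyne hb (hax1 _ _ hx hyne hxy) hy)
      · exact ⟨⊥, Or.inl rfl⟩
      · intro x hx y hy
        refine ⟨x ⊔ y, ?_, le_sup_left, le_sup_right⟩
        by_cases hxb : x = ⊥
        · subst hxb; simpa using hy
        by_cases hyb : y = ⊥
        · subst hyb; simpa using hx
        rcases hx with hx | hx
        · exact absurd hx hxb
        rcases hy with hy | hy
        · exact absurd hy hyb
        have hj : x ⊔ y ≠ ⊥ := by
          intro h'
          exact hxb (le_bot_iff.mp (h' ▸ (le_sup_left : x ≤ x ⊔ y)))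
        rcases hjoin x y hxb hyb with h' | h'
        · exact Or.inr (htrans (x ⊔ y) x b hj hxb hb h' hx)
        · exact Or.inr (htrans (x ⊔ y) y b hj hyb hb h' hy)
    have hdisj : ∀ x ∈ E, ¬ a ≤ x := by
      rintro x (hx | hx) hax
      · exact ha (le_bot_iff.mp (hx ▸ hax))
      · have hxne : x ≠ ⊥ := fun h' => ha (le_bot_iff.mp (h' ▸ hax))
        exact hSab (htrans a x b ha hxne hb (hax1 _ _ ha hxne hax) hx)
    obtain ⟨F, hF, haF, hFE⟩ := exists_primeFilter_of_isIdeal E hEideal a hdisj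
    obtain ⟨G, hG, hbG, hGg⟩ := h F hF haF
    obtain ⟨a', ha', hS⟩ := hGg b hbG
    exact (hFE a' ha') (Or.inr hS)
end

section
/- Let A be a bounded distributive lattice and ≽ a complete transitive relation on A satisfying Axioms 1 and 2. Let I = {a : a ∼ ⊥} and define a β b iff there exist c, c' ∈ I with b ≤ a ∨ c and a ≤ b ∨ c'. Then a β b implies a ∼ b. -/
theorem stmt_10 {A : Type*} [DistribLattice A] [BoundedOrder A]
    (S : A → A → Prop)
    (htotal : ∀ a b : A, S a b ∨ S b a)
    (htrans : ∀ a b c : A, S a b → S b c → S a c)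
    (hax1 : ∀ a b : A, a ≤ b → S a b)
    (hax2 : ∀ a a' b : A, (S a b ∧ ¬ S b a) → (S a' b ∧ ¬ S b a') →
      (S (a ⊔ a') b ∧ ¬ S b (a ⊔ a')))
    (I : Set A) (hIdef : I = {a : A | S a ⊥ ∧ S ⊥ a})
    (β : A → A → Prop)
    (hβ : ∀ a b : A, β a b ↔ ∃ c ∈ I, ∃ c' ∈ I, b ≤ a ⊔ c ∧ a ≤ b ⊔ c')
    (a b : A) (hab : β a b) :
    S a b ∧ S b a := by
  subst hIdef
  obtain ⟨c, hc, c', hc', hbac, habc⟩ := (hβ a b).mp hab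
  have key : ∀ x y : A, S y ⊥ → S (x ⊔ y) x := by
    intro x y hy
    by_contra h
    have h1 : S x (x ⊔ y) := hax1 _ _ le_sup_left
    have h2 : S y (x ⊔ y) := hax1 _ _ le_sup_right
    have h3 : ¬ S (x ⊔ y) y := fun hxy =>
      h (htrans _ _ _ (htrans _ _ _ hxy hy) (hax1 _ _ bot_le))
    exact (hax2 x y (x ⊔ y) ⟨h1, h⟩ ⟨h2, h3⟩).2 (hax1 _ _ le_rfl)
  constructor
  · exact htrans _ _ _ (hax1 _ _ habc) (key b c' hc'.1)
  · exact htrans _ _ _ (hax1 _ _ hbac) (key a c hc.1)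
end

section
/- Let A be a bounded distributive lattice, ≽ a total preorder on A \ {⊥} satisfying: a ≽ b iff there exists a prime filter G containing b with a ≽ b' for all b' ∈ G. Suppose b ≻ a. Then there exists a prime filter F containing a such that for every prime filter G containing b there exists b' ∈ G with b' ≻ a' for all a' ∈ F. -/
lemma mem_ne_bot {A : Type*} [DistribLattice A] [BoundedOrder A] {F : Set A}
    (hF : IsPrimeLatticeFilter F) {x : A} (hx : x ∈ F) : x ≠ ⊥ := by
  rintro rfl
  exact hF.2.2.2.1 (Set.eq_univ_of_forall fun y => hF.2.1 ⊥ y hx bot_le)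

theorem stmt_18 {A : Type*} [DistribLattice A] [BoundedOrder A]
    (S : A → A → Prop)
    (htotal : ∀ a b : A, a ≠ ⊥ → b ≠ ⊥ → S a b ∨ S b a)
    (htrans : ∀ a b c : A, a ≠ ⊥ → b ≠ ⊥ → c ≠ ⊥ → S a b → S b c → S a c)
    (hii : ∀ a b : A, a ≠ ⊥ → b ≠ ⊥ →
      (S a b ↔ ∃ G : Set A, IsPrimeLatticeFilter G ∧ b ∈ G ∧ ∀ b' ∈ G, S a b'))
    (a b : A) (ha : a ≠ ⊥) (hb : b ≠ ⊥)
    (hstrict : S b a ∧ ¬ S a b) :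
    ∃ F : Set A, IsPrimeLatticeFilter F ∧ a ∈ F ∧
      ∀ G : Set A, IsPrimeLatticeFilter G → b ∈ G →
        ∃ b' ∈ G, ∀ a' ∈ F, S b' a' ∧ ¬ S a' b' := by
  have hrefl : S a a := (htotal a a ha ha).elim id id
  obtain ⟨F, hF, haF, hFall⟩ := (hii a a ha ha).mp hrefl
  refine ⟨F, hF, haF, fun G hG hbG => ?_⟩
  -- since ¬ S a b, G cannot witness it: some b' ∈ G with ¬ S a b'
  have : ¬ ∀ b' ∈ G, S a b' := fun h => hstrict.2 ((hii a b ha hb).mpr ⟨G, hG, hbG, h⟩)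
  push_neg at this
  obtain ⟨b', hb'G, hnab'⟩ := this
  have hb' : b' ≠ ⊥ := mem_ne_bot hG hb'G
  refine ⟨b', hb'G, fun a' ha'F => ?_⟩
  have ha' : a' ≠ ⊥ := mem_ne_bot hF ha'F
  have hna'b' : ¬ S a' b' := fun h => hnab' (htrans a a' b' ha ha' hb' (hFall a' ha'F) h)
  exact ⟨(htotal b' a' hb' ha').resolve_right hna'b', hna'b'⟩
end
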